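/- arXiv:1303.2227 — 2 statements merged into one kernel-verified Lean document; each statement's English description precedes it below -/
import Mathlib

section
/- For all integers n ≥ 1, a ≥ 0, b ≥ 1, the multiple harmonic star sum H*_n({2}^a, 1, {2}^b) equals -2·∑_{k=1}^{n} (-1)^k·C(n,k)/(k^{2a+1+2b}·C(n+k,k)) - 4·∑_{k=1}^{n} H_{k-1}(-2b)·C(n,k)/(k^{2a+1}·C(n+k,k)), where H_{k-1}(-2b) = ∑_{j=1}^{k-1} (-1)^j/j^{2b}. -/
/-!
Write `r n k = C(n,k) / C(n+k,k)` and `S f n = ∑_{k=1}^n f k · r n k`. The identity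
`((n+1)² - k²) · r (n+1) k = (n+1)² · r n k` gives `S (f / k²) n = ∑_{m=1}^n S f m / m²`, so
prepending a `2` to the index list of a star sum of the form `S g` turns it into `S (g / k²)`.
Summation by parts along `(n - k) · r n k = (n + k + 1) · r n (k+1)` gives
`n · S f n = S (k · (2 F (k-1) + f k)) n` with `F` the partial sums of `f`; this handles the
prepended `1` and produces the alternating harmonic sums `H_{k-1}(-2b)`. The same telescoping
gives the start of the induction, `1 = -2 · S ((-1)^k) n` for `n ≥ 1`.
-/

open Finset

/-- Sign factor for an alternating multiple harmonic sum entry. -/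
def aSgn (s : ℤ) : ℚ := if 0 < s then 1 else -1

/-- Alternating multiple harmonic sum `H_n(s₁,…,s_ℓ)` (strict indices). -/
def Hh : ℕ → List ℤ → ℚ
  | _, [] => 1
  | n, s :: r => ∑ k ∈ Finset.Icc 1 n, aSgn s ^ k / (k : ℚ) ^ s.natAbs * Hh (k - 1) r

/-- Alternating multiple harmonic star sum `H*_n(s₁,…,s_ℓ)` (weak indices). -/
def Hstar : ℕ → List ℤ → ℚ
  | _, [] => 1
  | n, s :: r => ∑ k ∈ Finset.Icc 1 n, aSgn s ^ k / (k : ℚ) ^ s.natAbs * Hstar k r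

/-- All compositions (ordered tuples of positive integers) of `w`. -/
def comps : ℕ → List (List ℕ)
  | 0 => [[]]
  | (w+1) => (List.range (w+1)).flatMap (fun j => (comps (w - j)).map (fun l => (j+1) :: l))
decreasing_by simp_wf; try omega

/-- Coerce a list of naturals to a list of integers. -/
def natList (l : List ℕ) : List ℤ := l.map (fun m => (m : ℤ))

def binomRatio (n k : ℕ) : ℚ := (n.choose k) / ((n + k).choose k)

theorem binomRatio_zero_right (n : ℕ) : binomRatio n 0 = 1 := by simp [binomRatio]

theorem binomRatio_of_lt {n k : ℕ} (h : n < k) : binomRatio n k = 0 := by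
  simp [binomRatio, Nat.choose_eq_zero_of_lt h]

theorem sub_mul_binomRatio (n k : ℕ) :
    ((n : ℚ) - k) * binomRatio n k = ((n : ℚ) + k + 1) * binomRatio n (k + 1) := by
  rcases lt_or_ge n (k + 1) with hk | hk
  · rcases (Nat.lt_succ_iff.1 hk).eq_or_lt with rfl | hk'
    · simp [binomRatio_of_lt hk]
    · simp [binomRatio_of_lt hk, binomRatio_of_lt hk']
  have hn : (n.choose (k + 1) : ℚ) * (k + 1) = n.choose k * ((n : ℚ) - k) := by
    rw [← Nat.cast_sub (by omega)]; exact_mod_cast Nat.choose_succ_right_eq n k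
  have hnk : ((n + k + 1).choose (k + 1) : ℚ) * (k + 1) = (n + k + 1) * (n + k).choose k := by
    exact_mod_cast (Nat.add_one_mul_choose_eq (n + k) k).symm
  have h0 : ((n + k).choose k : ℚ) ≠ 0 := by exact_mod_cast (Nat.choose_pos (by omega)).ne'
  have h1 : ((n + k + 1).choose (k + 1) : ℚ) ≠ 0 := by
    exact_mod_cast (Nat.choose_pos (by omega)).ne'
  rw [binomRatio, binomRatio, ← add_assoc, mul_div_assoc', mul_div_assoc', div_eq_div_iff h0 h1]
  apply mul_right_cancel₀ (by positivity : (k : ℚ) + 1 ≠ 0)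
  linear_combination ((n : ℚ) - k) * n.choose k * hnk - ((n : ℚ) + k + 1) * (n + k).choose k * hn

theorem sq_sub_sq_mul_binomRatio_succ (n k : ℕ) :
    (((n : ℚ) + 1) ^ 2 - k ^ 2) * binomRatio (n + 1) k = ((n : ℚ) + 1) ^ 2 * binomRatio n k := by
  rcases lt_or_ge (n + 1) k with hk | hk
  · simp [binomRatio_of_lt hk, binomRatio_of_lt (Nat.lt_of_succ_lt hk)]
  have hn : ((n + 1).choose k : ℚ) * ((n : ℚ) + 1 - k) = n.choose k * ((n : ℚ) + 1) := by
    rw [← Nat.cast_add_one, ← Nat.cast_sub hk]; exact_mod_cast (Nat.choose_mul_succ_eq n k).symm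
  have hnk : ((n + 1 + k).choose k : ℚ) * ((n : ℚ) + 1) = (n + k).choose k * ((n : ℚ) + 1 + k) := by
    have h := Nat.choose_mul_succ_eq (n + k) k
    rw [show n + k + 1 - k = n + 1 by omega, show n + k + 1 = n + 1 + k by omega] at h
    exact_mod_cast h.symm
  have h0 : ((n + k).choose k : ℚ) ≠ 0 := by exact_mod_cast (Nat.choose_pos (by omega)).ne'
  have h1 : ((n + 1 + k).choose k : ℚ) ≠ 0 := by exact_mod_cast (Nat.choose_pos (by omega)).ne'
  rw [binomRatio, binomRatio]
  field_simp
  linear_combination ((n : ℚ) + 1 + k) * (n + k).choose k * hn - ((n : ℚ) + 1) * n.choose k * hnk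

def binomRatioSum (f : ℕ → ℚ) (n : ℕ) : ℚ := ∑ k ∈ Icc 1 n, f k * binomRatio n k

theorem binomRatioSum_eq_sum_range (f : ℕ → ℚ) (n : ℕ) :
    binomRatioSum f n = ∑ i ∈ range n, f (i + 1) * binomRatio n (i + 1) := by
  rw [binomRatioSum, ← Ico_add_one_right_eq_Icc, sum_Ico_eq_sum_range]
  simp [add_comm]

theorem binomRatioSum_const_mul (c : ℚ) (f : ℕ → ℚ) (n : ℕ) :
    binomRatioSum (fun k => c * f k) n = c * binomRatioSum f n := by
  simp only [binomRatioSum, mul_sum, mul_assoc]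

theorem binomRatioSum_div_sq_succ (f : ℕ → ℚ) (n : ℕ) :
    binomRatioSum (fun k => f k / k ^ 2) (n + 1)
      = binomRatioSum (fun k => f k / k ^ 2) n + binomRatioSum f (n + 1) / ((n : ℚ) + 1) ^ 2 := by
  have hext : binomRatioSum (fun k => f k / k ^ 2) n
      = ∑ k ∈ Icc 1 (n + 1), f k / k ^ 2 * binomRatio n k := by
    rw [binomRatioSum, sum_Icc_succ_top (by omega), binomRatio_of_lt n.lt_succ_self]
    simp
  rw [hext, binomRatioSum, binomRatioSum, sum_div, ← sum_add_distrib]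
  refine sum_congr rfl fun k hk => ?_
  have hk0 : (k : ℚ) ≠ 0 := by have := (mem_Icc.1 hk).1; positivity
  field_simp
  linear_combination f k * sq_sub_sq_mul_binomRatio_succ n k

theorem binomRatioSum_div_sq (f : ℕ → ℚ) (n : ℕ) :
    binomRatioSum (fun k => f k / k ^ 2) n = ∑ m ∈ Icc 1 n, binomRatioSum f m / (m : ℚ) ^ 2 := by
  induction n with
  | zero => simp [binomRatioSum]
  | succ n ih =>
    rw [binomRatioSum_div_sq_succ, ih, sum_Icc_succ_top (by omega)]
    push_cast
    rfl

theorem binomRatioSum_neg_one_pow {n : ℕ} (hn : 1 ≤ n) :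
    binomRatioSum (fun k => (-1) ^ k) n = -1 / 2 := by
  set v : ℕ → ℚ := fun k => (-1) ^ k * ((n : ℚ) - k) * binomRatio n k
  have hstep : ∀ i, v (i + 1) - v i = 2 * n * ((-1) ^ (i + 1) * binomRatio n (i + 1)) := by
    intro i
    simp only [v]
    push_cast
    linear_combination -(-1 : ℚ) ^ i * sub_mul_binomRatio n i
  have htel : 2 * n * binomRatioSum (fun k => (-1) ^ k) n = v n - v 0 := by
    rw [← sum_range_sub, binomRatioSum_eq_sum_range, mul_sum]
    exact sum_congr rfl fun i _ => (hstep i).symm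
  simp only [v, sub_self, mul_zero, zero_mul, binomRatio_zero_right] at htel
  refine mul_left_cancel₀ (by positivity : (2 * n : ℚ) ≠ 0) ?_
  linear_combination htel

theorem natCast_mul_binomRatioSum (f : ℕ → ℚ) (n : ℕ) :
    n * binomRatioSum f n
      = binomRatioSum (fun k => k * (2 * ∑ i ∈ Icc 1 (k - 1), f i + f k)) n := by
  set G : ℕ → ℚ := fun k => (∑ i ∈ Icc 1 k, f i) * ((n : ℚ) - k) * binomRatio n k
  have hstep : ∀ i, G (i + 1) - G i
      = (f (i + 1) * (n - (i + 1 : ℕ)) - 2 * (i + 1 : ℕ) * ∑ j ∈ Icc 1 i, f j)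
        * binomRatio n (i + 1) := by
    intro i
    simp only [G, sum_Icc_succ_top (Nat.le_add_left 1 i)]
    push_cast
    linear_combination -(∑ j ∈ Icc 1 i, f j) * sub_mul_binomRatio n i
  have htel : ∑ i ∈ range n, (G (i + 1) - G i) = 0 := by
    rw [sum_range_sub]
    simp [G]
  rw [← sub_eq_zero, binomRatioSum_eq_sum_range, binomRatioSum_eq_sum_range, mul_sum,
    ← sum_sub_distrib, ← htel]
  refine sum_congr rfl fun i _ => ?_
  rw [hstep, Nat.add_sub_cancel]
  ring

theorem Hstar_cons_of_pos {s : ℤ} (hs : 0 < s) (n : ℕ) (r : List ℤ) :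
    Hstar n (s :: r) = ∑ k ∈ Icc 1 n, Hstar k r / (k : ℚ) ^ s.natAbs := by
  simp only [Hstar, aSgn, if_pos hs, one_pow, one_div_mul_eq_div]

theorem Hstar_cons_two {r : List ℤ} {g : ℕ → ℚ}
    (h : ∀ m, 1 ≤ m → Hstar m r = binomRatioSum g m) (n : ℕ) :
    Hstar n (2 :: r) = binomRatioSum (fun k => g k / k ^ 2) n := by
  rw [Hstar_cons_of_pos two_pos, binomRatioSum_div_sq]
  exact sum_congr rfl fun m hm => by rw [h m (mem_Icc.1 hm).1]; rfl

theorem Hstar_cons_one {r : List ℤ} {g : ℕ → ℚ}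
    (h : ∀ m, 1 ≤ m → Hstar m r = binomRatioSum g m) (n : ℕ) :
    Hstar n (1 :: r)
      = binomRatioSum (fun k => (2 * ∑ i ∈ Icc 1 (k - 1), g i + g k) / k) n := by
  have hdiv : binomRatioSum (fun k => (2 * ∑ i ∈ Icc 1 (k - 1), g i + g k) / k) n
      = binomRatioSum (fun k => k * (2 * ∑ i ∈ Icc 1 (k - 1), g i + g k) / k ^ 2) n := by
    refine sum_congr rfl fun k hk => ?_
    have hk0 : (k : ℚ) ≠ 0 := by have := (mem_Icc.1 hk).1; positivity
    field_simp
  rw [hdiv, binomRatioSum_div_sq, Hstar_cons_of_pos one_pos]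
  refine sum_congr rfl fun m hm => ?_
  have hm0 : (m : ℚ) ≠ 0 := by have := (mem_Icc.1 hm).1; positivity
  rw [h m (mem_Icc.1 hm).1, ← natCast_mul_binomRatioSum, Int.natAbs_one, pow_one]
  field_simp

theorem Hstar_replicate_two_append {r : List ℤ} {g : ℕ → ℚ}
    (h : ∀ m, 1 ≤ m → Hstar m r = binomRatioSum g m) (a : ℕ) {n : ℕ} (hn : 1 ≤ n) :
    Hstar n (List.replicate a 2 ++ r) = binomRatioSum (fun k => g k / k ^ (2 * a)) n := by
  induction a generalizing n with
  | zero => simpa using h n hn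
  | succ a ih =>
    rw [List.replicate_succ, List.cons_append, Hstar_cons_two (fun m hm => ih hm)]
    congr 1
    funext k
    ring

theorem Hstar_replicate_two (b : ℕ) {n : ℕ} (hn : 1 ≤ n) :
    Hstar n (List.replicate b 2) = binomRatioSum (fun k => -2 * (-1) ^ k / k ^ (2 * b)) n := by
  have hnil : ∀ m, 1 ≤ m → Hstar m [] = binomRatioSum (fun k => -2 * (-1) ^ k) m := by
    intro m hm
    rw [Hstar, binomRatioSum_const_mul, binomRatioSum_neg_one_pow hm]
    norm_num
  simpa using Hstar_replicate_two_append hnil b hn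

theorem Hstar_one_replicate_two (b : ℕ) (n : ℕ) :
    Hstar n (1 :: List.replicate b 2)
      = binomRatioSum (fun k => -2 * (-1) ^ k / k ^ (2 * b + 1)
          - 4 * (∑ i ∈ Icc 1 (k - 1), (-1) ^ i / (i : ℚ) ^ (2 * b)) / k) n := by
  rw [Hstar_cons_one (fun m hm => Hstar_replicate_two b hm)]
  refine sum_congr rfl fun k _ => ?_
  simp only [mul_div_assoc, ← mul_sum]
  ring

theorem Hh_singleton_neg (m s : ℕ) : Hh m [-(s : ℤ)] = ∑ i ∈ Icc 1 m, (-1) ^ i / (i : ℚ) ^ s := by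
  simp [Hh, aSgn, (Int.natCast_nonneg s).not_gt]

theorem stmt2_general (n a b : ℕ) (hn : 1 ≤ n) :
    Hstar n (List.replicate a 2 ++ [1] ++ List.replicate b 2)
      = -2 * ∑ k ∈ Finset.Icc 1 n,
            (-1 : ℚ) ^ k * (n.choose k) / ((k : ℚ) ^ (2*a+1+2*b) * ((n+k).choose k))
        - 4 * ∑ k ∈ Finset.Icc 1 n,
            Hh (k-1) [-(2 * (b : ℤ))] * (n.choose k) / ((k : ℚ) ^ (2*a+1) * ((n+k).choose k)) := by
  rw [List.append_assoc, List.singleton_append,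
    Hstar_replicate_two_append (fun m _ => Hstar_one_replicate_two b m) a hn,
    binomRatioSum, mul_sum, mul_sum, ← sum_sub_distrib]
  refine sum_congr rfl fun k _ => ?_
  rw [binomRatio, show -(2 * (b : ℤ)) = -((2 * b : ℕ) : ℤ) by push_cast; rfl, Hh_singleton_neg]
  ring

theorem stmt2 (n a b : ℕ) (hn : 1 ≤ n) (hb : 1 ≤ b) :
    Hstar n (List.replicate a 2 ++ [1] ++ List.replicate b 2)
      = -2 * ∑ k ∈ Finset.Icc 1 n,
            (-1 : ℚ) ^ k * (n.choose k) / ((k : ℚ) ^ (2*a+1+2*b) * ((n+k).choose k))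
        - 4 * ∑ k ∈ Finset.Icc 1 n,
            Hh (k-1) [-(2 * (b : ℤ))] * (n.choose k) / ((k : ℚ) ^ (2*a+1) * ((n+k).choose k)) :=
  stmt2_general n a b hn
end

section
/- For all integers n ≥ 1 and a ≥ 0, the alternating multiple harmonic star sum H*_n({1}^a, -1) = ∑_{n ≥ k_1 ≥ ... ≥ k_{a+1} ≥ 1} (-1)^{k_{a+1}}/(k_1·k_2·...·k_{a+1}) equals ∑_{k=1}^{n} (2^k - 1)·(-1)^k·C(n,k)/k^{a+1}. -/
/-!
Both sides satisfy the same recursion in `a`. On the left, `H*_n(1, s) = ∑_{k ≤ n} H*_k(s) / k`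
directly from the definition. On the right, `B_a(n) = binomSum c a n = ∑_k c_k C(n,k) / k^a`
satisfies `B_{a+1}(n) = ∑_{k ≤ n} B_a(k) / k` for any coefficients `c`, by telescoping in `n`:
Pascal's rule and `k C(n+1,k) = (n+1) C(n,k-1)` give `B_{a+1}(n+1) - B_{a+1}(n) = B_a(n+1) / (n+1)`.
For `c_k = (2^k - 1)(-1)^k = (-2)^k - (-1)^k` the binomial theorem gives `B_0(n) = (-1)^n` for
`n ≥ 1`, which matches `H*_n(-1) = ∑_{k ≤ n} (-1)^k / k`.
-/

open Finset

lemma sum_Icc_one_eq_sum_range {M : Type*} [AddCommMonoid M] (f : ℕ → M) (hf : f 0 = 0)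
    (n : ℕ) :
    ∑ k ∈ Icc 1 n, f k = ∑ k ∈ range (n + 1), f k := by
  rw [range_eq_Ico, sum_eq_sum_Ico_succ_bot n.succ_pos, hf, zero_add]
  rfl

section
variable {K : Type*} [Field K]

def binomSum (c : ℕ → K) (a n : ℕ) : K := ∑ k ∈ Icc 1 n, c k * n.choose k / (k : K) ^ a

lemma binomSum_succ_succ [CharZero K] (c : ℕ → K) (a m : ℕ) :
    binomSum c (a + 1) (m + 1) = binomSum c (a + 1) m + binomSum c a (m + 1) / (m + 1) := by
  have hextend :
      binomSum c (a + 1) m = ∑ k ∈ Icc 1 (m + 1), c k * m.choose k / (k : K) ^ (a + 1) := by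
    rw [sum_Icc_succ_top (by omega), Nat.choose_succ_self]
    simp [binomSum]
  rw [hextend, binomSum, binomSum, sum_div, ← sum_add_distrib]
  refine sum_congr rfl fun k hk => ?_
  obtain ⟨j, rfl⟩ : ∃ j, k = j + 1 := ⟨k - 1, by grind⟩
  have pascal : ((m + 1).choose (j + 1) : K) = m.choose j + m.choose (j + 1) := by
    rw [Nat.choose_succ_succ]; push_cast; ring
  have absorb : ((m : K) + 1) * m.choose j = ((m + 1).choose (j + 1) : K) * (j + 1) := by
    exact_mod_cast Nat.add_one_mul_choose_eq m j
  have hj : (j : K) + 1 ≠ 0 := Nat.cast_add_one_ne_zero j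
  have hm : (m : K) + 1 ≠ 0 := Nat.cast_add_one_ne_zero m
  push_cast
  field_simp
  linear_combination c (j + 1) * ((j : K) + 1) ^ a * (((m : K) + 1) * pascal + absorb)

lemma binomSum_succ [CharZero K] (c : ℕ → K) (a n : ℕ) :
    binomSum c (a + 1) n = ∑ k ∈ Icc 1 n, binomSum c a k / k := by
  induction n with
  | zero => simp [binomSum]
  | succ m ih => rw [binomSum_succ_succ, ih, sum_Icc_succ_top (by omega), Nat.cast_succ]

lemma binomSum_zero_two_pow_sub_one (n : ℕ) :
    binomSum (fun k => ((2 : K) ^ k - 1) * (-1) ^ k) 0 n = (-1) ^ n - 0 ^ n := by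
  have binomial (x : K) : ∑ k ∈ range (n + 1), x ^ k * n.choose k = (x + 1) ^ n := by
    simp [add_pow]
  simp only [binomSum, pow_zero, div_one]
  rw [sum_Icc_one_eq_sum_range _ (by simp)]
  calc ∑ k ∈ range (n + 1), ((2 : K) ^ k - 1) * (-1) ^ k * n.choose k
      = ∑ k ∈ range (n + 1), (-2 : K) ^ k * n.choose k
        - ∑ k ∈ range (n + 1), (-1 : K) ^ k * n.choose k := by
        rw [← sum_sub_distrib]
        refine sum_congr rfl fun k _ => ?_
        rw [neg_pow (2 : K)]
        ring
    _ = (-1) ^ n - 0 ^ n := by rw [binomial, binomial]; norm_num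

end

lemma Hstar_neg_one (n : ℕ) : Hstar n [-1] = ∑ k ∈ Icc 1 n, (-1 : ℚ) ^ k / k := by
  simp [Hstar, aSgn]

lemma Hstar_one_cons (n : ℕ) (r : List ℤ) :
    Hstar n (1 :: r) = ∑ k ∈ Icc 1 n, Hstar k r / k := by
  simp [Hstar, aSgn, div_eq_inv_mul]

lemma Hstar_replicate_one_append_neg_one (a n : ℕ) :
    Hstar n (List.replicate a 1 ++ [-1])
      = binomSum (fun k => ((2 : ℚ) ^ k - 1) * (-1) ^ k) (a + 1) n := by
  induction a generalizing n with
  | zero =>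
    rw [binomSum_succ, List.replicate_zero, List.nil_append, Hstar_neg_one]
    refine sum_congr rfl fun k hk => ?_
    rw [binomSum_zero_two_pow_sub_one, zero_pow (by grind), sub_zero]
  | succ a ih =>
    rw [binomSum_succ, List.replicate_succ, List.cons_append, Hstar_one_cons]
    simp only [ih]

theorem stmt13_general (n a : ℕ) :
    Hstar n (List.replicate a 1 ++ [-1])
      = ∑ k ∈ Finset.Icc 1 n,
          ((2 : ℚ) ^ k - 1) * (-1 : ℚ) ^ k * (n.choose k) / (k : ℚ) ^ (a+1) :=
  Hstar_replicate_one_append_neg_one a n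

theorem stmt13 (n a : ℕ) (hn : 1 ≤ n) :
    Hstar n (List.replicate a 1 ++ [-1])
      = ∑ k ∈ Finset.Icc 1 n,
          ((2 : ℚ) ^ k - 1) * (-1 : ℚ) ^ k * (n.choose k) / (k : ℚ) ^ (a+1) :=
  stmt13_general n a
end
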